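/- Let A be the adjacency matrix of an SRG(v,k,λ,μ) with 0 < k < v−1 and v = 4k − 2λ − 2μ, and suppose v − 2k − 1 > 0. Then the unique β > 0 for which G = 2βA + (β+1)I − βJ satisfies G² = αG for some α is β = 1/(v−2k−1), with α = (v−1)/(v−2k−1)² + 1 and m = v/α = v(v−2k−1)²/((v−1)+(v−2k−1)²); moreover G𝟏 = 0, so the resulting ETF is centered. -/

import Mathlib

/-!
Expanding `G(β)²` with the SRG identity, the diagonal and the non-adjacent entries of
`G(β)² = α G(β)` force `α = 1 + (v - 1)β²` and `(v - 1)β² - (4k - 4μ - v + 2)β - 1 = 0`, while the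
adjacent entries give the same quadratic with `2(λ - μ + 1)` in place of `4k - 4μ - v + 2`; the two
agree exactly when `v = 4k - 2λ - 2μ`. Together with `k(k - λ - 1) = (v - k - 1)μ` the quadratic
times `s = v - 2k - 1` factors as `(sβ - 1)((v - 1)β + s)`, so `1/s` is its only positive root.
Finally `G/α` is idempotent, so its trace `v/α` is its rank, a natural number.
-/

open Matrix

/-- `A` is the adjacency matrix of a strongly regular graph with parameters
`(v, k, λ, μ)`. -/
def IsSRG {v : ℕ} (A : Matrix (Fin v) (Fin v) ℝ) (k l mu : ℝ) : Prop :=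
  A.IsAdjMatrix ∧
    (A *ᵥ (fun _ => (1 : ℝ)) = fun _ => k) ∧
    A * A = (l - mu) • A + (k - mu) • (1 : Matrix (Fin v) (Fin v) ℝ)
      + mu • Matrix.of (fun _ _ => (1 : ℝ))

/-- The matrix `G(β) = 2βA + (β+1)I − βJ`. -/
def gramOf {v : ℕ} (A : Matrix (Fin v) (Fin v) ℝ) (β : ℝ) :
    Matrix (Fin v) (Fin v) ℝ :=
  (2 * β) • A + (β + 1) • (1 : Matrix (Fin v) (Fin v) ℝ)
    - β • Matrix.of (fun _ _ => (1 : ℝ))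

namespace Matrix

variable {R n : Type*} [Fintype n]

theorem mul_of_one_eq_smul [Semiring R] {A : Matrix n n R} {k : R}
    (hA : A *ᵥ (fun _ => 1) = fun _ => k) :
    A * of (fun _ _ => (1 : R)) = k • of (fun _ _ => (1 : R)) := by
  ext i j
  simpa [mul_apply, mulVec, dotProduct] using congrFun hA i

theorem of_one_mul_eq_smul [Semiring R] {A : Matrix n n R} {k : R} (hsymm : A.IsSymm)
    (hA : A *ᵥ (fun _ => 1) = fun _ => k) :
    of (fun _ _ => (1 : R)) * A = k • of (fun _ _ => (1 : R)) := by
  ext i j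
  simpa [mul_apply, mulVec, dotProduct, hsymm.apply] using congrFun hA j

theorem of_one_mul_of_one [Semiring R] :
    (of (fun _ _ => 1) * of (fun _ _ => 1) : Matrix n n R)
      = (Fintype.card n : R) • of (fun _ _ => 1) := by
  ext i j
  simp [mul_apply]

theorem IsAdjMatrix.exists_ne_apply_eq_zero [DecidableEq n] [Ring R] [LinearOrder R]
    [IsStrictOrderedRing R] {A : Matrix n n R} (hA : A.IsAdjMatrix) (i : n)
    (hrow : ∑ j, A i j < Fintype.card n - 1) : ∃ j, j ≠ i ∧ A i j = 0 := by
  by_contra! hne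
  have hrow_eq : A i = fun j => if j = i then 0 else 1 := by
    ext j
    split_ifs with hji
    · exact hji ▸ hA.apply_diag i
    · exact (hA.zero_or_one i j).resolve_left (hne j hji)
  simp only [hrow_eq] at hrow
  simp [Finset.sum_ite, Finset.filter_ne', Nat.cast_pred (Fintype.card_pos_iff.mpr ⟨i⟩)] at hrow

theorem trace_eq_rank_of_isIdempotentElem {K : Type*} [Field K] [DecidableEq n]
    {P : Matrix n n K} (hP : IsIdempotentElem P) : P.trace = P.rank := by
  have hP' : IsIdempotentElem (toLin' P) := hP.map toLinAlgEquiv'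
  rw [← trace_toLin'_eq, (LinearMap.IsIdempotentElem.isProj_range _ hP').trace]
  rfl

theorem trace_div_eq_rank_of_mul_self_eq_smul {K : Type*} [Field K] [DecidableEq n]
    {G : Matrix n n K} {α : K} (hα : α ≠ 0) (hG : G * G = α • G) :
    G.trace / α = (α⁻¹ • G).rank := by
  have hP : IsIdempotentElem (α⁻¹ • G) := by
    rw [IsIdempotentElem, smul_mul_smul_comm, hG, smul_smul, mul_assoc, inv_mul_cancel₀ hα, mul_one]
  rw [← trace_eq_rank_of_isIdempotentElem hP, trace_smul, smul_eq_mul, div_eq_inv_mul]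

end Matrix

def gramQuadratic (v k mu β : ℝ) : ℝ :=
  (v - 1) * β ^ 2 - (4 * k - 4 * mu - v + 2) * β - 1

theorem gramQuadratic_eq_zero_iff {v k l mu β : ℝ} (hparam : k * (k - l - 1) = (v - k - 1) * mu)
    (hspecial : v = 4 * k - 2 * l - 2 * mu) (hs : 0 < v - 2 * k - 1) (hv : 1 < v)
    (hβ : 0 < β) : gramQuadratic v k mu β = 0 ↔ β = 1 / (v - 2 * k - 1) := by
  have hfactor : (v - 2 * k - 1) * gramQuadratic v k mu β
      = ((v - 2 * k - 1) * β - 1) * ((v - 1) * β + (v - 2 * k - 1)) := by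
    unfold gramQuadratic
    linear_combination (-4 * β) * hparam - 2 * k * β * hspecial
  have hs0 : v - 2 * k - 1 ≠ 0 := hs.ne'
  constructor
  · intro hQ
    have hsecond : 0 < (v - 1) * β + (v - 2 * k - 1) := by nlinarith
    rw [hQ, mul_zero, eq_comm, mul_eq_zero] at hfactor
    have hroot := hfactor.resolve_right hsecond.ne'
    field_simp
    linarith
  · rintro rfl
    rw [mul_one_div_cancel hs0, sub_self, zero_mul, mul_eq_zero] at hfactor
    exact hfactor.resolve_left hs0

section SRG

variable {v : ℕ} {A : Matrix (Fin v) (Fin v) ℝ} {k l mu : ℝ}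

theorem trace_gramOf (hA : A.IsAdjMatrix) (β : ℝ) : (gramOf A β).trace = v := by
  simp [gramOf, trace, hA.apply_diag]

theorem gramOf_mulVec_one (hA : A *ᵥ (fun _ => 1) = fun _ => k) (β : ℝ) :
    gramOf A β *ᵥ (fun _ => 1) = fun _ => 1 - β * (v - 2 * k - 1) := by
  rw [gramOf, sub_mulVec, add_mulVec, smul_mulVec, smul_mulVec, smul_mulVec, one_mulVec, hA]
  ext i
  simp only [Pi.sub_apply, Pi.add_apply, Pi.smul_apply, smul_eq_mul, mul_one, mulVec, dotProduct,
    of_apply, Finset.sum_const, Finset.card_univ, Fintype.card_fin, nsmul_eq_mul]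
  ring

namespace IsSRG

theorem param_eq (h : IsSRG A k l mu) (hv : 0 < v) : k * (k - l - 1) = (v - k - 1) * mu := by
  obtain ⟨-, hrow, hsq⟩ := h
  have hJJ := of_one_mul_of_one (n := Fin v) (R := ℝ)
  rw [Fintype.card_fin] at hJJ
  have := congrArg (· * of fun _ _ => (1 : ℝ)) hsq
  simp only [Matrix.mul_assoc, mul_of_one_eq_smul hrow, mul_smul_comm, add_mul, smul_mul_assoc,
    Matrix.one_mul, hJJ, smul_smul, ← add_smul] at this
  have := congrFun (congrFun this ⟨0, hv⟩) ⟨0, hv⟩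
  simp only [Matrix.smul_apply, of_apply, smul_eq_mul, mul_one] at this
  linear_combination this

theorem gramOf_mul_self (h : IsSRG A k l mu) (β : ℝ) :
    gramOf A β * gramOf A β =
      (4 * β ^ 2 * (l - mu) + 4 * β * (β + 1)) • A
      + (4 * β ^ 2 * (k - mu) + (β + 1) ^ 2) • (1 : Matrix (Fin v) (Fin v) ℝ)
      + (4 * β ^ 2 * (mu - k) - 2 * β * (β + 1) + β ^ 2 * v) • of (fun _ _ => (1 : ℝ)) := by
  obtain ⟨hadj, hrow, hsq⟩ := h
  have hJJ := of_one_mul_of_one (n := Fin v) (R := ℝ)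
  rw [Fintype.card_fin] at hJJ
  simp only [gramOf, sub_mul, mul_sub, add_mul, mul_add, smul_mul_assoc, mul_smul_comm,
    Matrix.one_mul, Matrix.mul_one, hsq, mul_of_one_eq_smul hrow,
    of_one_mul_eq_smul hadj.symm hrow, hJJ, smul_add, smul_smul]
  module

theorem gramQuadratic_eq_zero (h : IsSRG A k l mu) {i j : Fin v} (hij : i ≠ j) (hAij : A i j = 0)
    {β α : ℝ} (hβ : β ≠ 0) (hG : gramOf A β * gramOf A β = α • gramOf A β) :
    gramQuadratic v k mu β = 0 := by
  have hdiag := congrFun (congrFun hG i) i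
  have hoff := congrFun (congrFun hG i) j
  rw [h.gramOf_mul_self] at hdiag hoff
  simp only [gramOf, Matrix.add_apply, Matrix.sub_apply, Matrix.smul_apply, smul_of, of_apply,
    Pi.smul_apply, one_apply_eq, one_apply_ne hij, h.1.apply_diag, hAij, smul_eq_mul, mul_zero,
    mul_one, zero_add, add_zero, zero_sub, mul_neg, add_sub_cancel_left] at hdiag hoff
  have hβQ : β * gramQuadratic v k mu β = 0 := by
    unfold gramQuadratic
    linear_combination hoff + β * hdiag
  exact (mul_eq_zero.mp hβQ).resolve_left hβ

theorem gramOf_mul_self_eq_smul (h : IsSRG A k l mu) (hspecial : (v : ℝ) = 4 * k - 2 * l - 2 * mu)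
    {β : ℝ} (hβ : gramQuadratic v k mu β = 0) :
    gramOf A β * gramOf A β = (1 + (v - 1) * β ^ 2) • gramOf A β := by
  rw [h.gramOf_mul_self, gramOf]
  unfold gramQuadratic at hβ
  match_scalars
  · linear_combination (-2 * β) * hβ + 2 * β ^ 2 * hspecial
  · linear_combination (-β) * hβ
  · linear_combination β * hβ

end IsSRG

end SRG

/-- Let `A` be the adjacency matrix of an `SRG(v,k,λ,μ)` with `0 < k < v−1`,
`v = 4k − 2λ − 2μ` and `v − 2k − 1 > 0`.  Then the unique `β > 0` for which
`G = 2βA + (β+1)I − βJ` satisfies `G² = αG` for some `α` is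
`β = 1/(v−2k−1)`, with `α = (v−1)/(v−2k−1)² + 1` and
`m = v/α = v(v−2k−1)²/((v−1)+(v−2k−1)²)` a positive integer; moreover
`G𝟏 = 0`, so the resulting ETF is centered. -/
theorem srg_gives_centered_etf (v : ℕ) (k l mu : ℝ)
    (A : Matrix (Fin v) (Fin v) ℝ) (h : IsSRG A k l mu)
    (hk : 0 < k) (hk' : k < (v : ℝ) - 1)
    (hspecial : (v : ℝ) = 4 * k - 2 * l - 2 * mu)
    (hpos : 0 < (v : ℝ) - 2 * k - 1) :
    (∀ β : ℝ, 0 < β → (∃ α : ℝ, gramOf A β * gramOf A β = α • gramOf A β) →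
        β = 1 / ((v : ℝ) - 2 * k - 1))
    ∧ gramOf A (1 / ((v : ℝ) - 2 * k - 1)) * gramOf A (1 / ((v : ℝ) - 2 * k - 1))
        = (((v : ℝ) - 1) / ((v : ℝ) - 2 * k - 1) ^ 2 + 1)
            • gramOf A (1 / ((v : ℝ) - 2 * k - 1))
    ∧ (∃ m : ℕ, 0 < m ∧
        (m : ℝ) = (v : ℝ) * ((v : ℝ) - 2 * k - 1) ^ 2
            / (((v : ℝ) - 1) + ((v : ℝ) - 2 * k - 1) ^ 2) ∧
        (v : ℝ) / m = ((v : ℝ) - 1) / ((v : ℝ) - 2 * k - 1) ^ 2 + 1)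
    ∧ gramOf A (1 / ((v : ℝ) - 2 * k - 1)) *ᵥ (fun _ => (1 : ℝ)) = 0 := by
  have hv : (0 : ℝ) < v := by linarith
  have hroot : ∀ β > 0, gramQuadratic v k mu β = 0 ↔ β = 1 / ((v : ℝ) - 2 * k - 1) :=
    fun β hβ => gramQuadratic_eq_zero_iff (h.param_eq (by exact_mod_cast hv)) hspecial hpos
      (by linarith) hβ
  set β₀ := 1 / ((v : ℝ) - 2 * k - 1) with hβ₀
  have hβ₀pos : 0 < β₀ := one_div_pos.mpr hpos
  set α₀ := ((v : ℝ) - 1) / ((v : ℝ) - 2 * k - 1) ^ 2 + 1 with hα₀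
  have hα₀pos : 0 < α₀ := add_pos (div_pos (by linarith) (by positivity)) one_pos
  have hG : gramOf A β₀ * gramOf A β₀ = α₀ • gramOf A β₀ := by
    rw [h.gramOf_mul_self_eq_smul hspecial ((hroot β₀ hβ₀pos).mpr rfl), hβ₀, hα₀]
    congr 1
    field_simp
    ring
  obtain ⟨m, hm⟩ : ∃ m : ℕ, (m : ℝ) = v / α₀ :=
    ⟨(α₀⁻¹ • gramOf A β₀).rank,
      by rw [← trace_div_eq_rank_of_mul_self_eq_smul hα₀pos.ne' hG, trace_gramOf h.1]⟩
  refine ⟨fun β hβ ⟨α, hα⟩ => ?_, hG, ⟨m, ?_, ?_, ?_⟩, ?_⟩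
  · obtain ⟨j, hji, hAij⟩ := h.1.exists_ne_apply_eq_zero ⟨0, by exact_mod_cast hv⟩
      (by simpa [Fintype.card_fin, mulVec, dotProduct] using (congrFun h.2.1 _).trans_lt hk')
    exact (hroot β hβ).mp (h.gramQuadratic_eq_zero hji.symm hAij hβ.ne' hα)
  · exact_mod_cast hm ▸ div_pos hv hα₀pos
  · rw [hm, hα₀]
    field_simp
  · rw [hm, div_div_cancel₀ hv.ne']
  · rw [gramOf_mulVec_one h.2.1, hβ₀, one_div_mul_cancel hpos.ne', sub_self]
    rfl
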